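/- arXiv:math/0503744 — 6 statements merged into one kernel-verified Lean document; each statement's English description precedes it below -/
import Mathlib

section
/- Let a > 0 and b > −a. Then there is a constant C = C(a,b) such that for all r, t > 0, ∫_{|t−r|}^{t+r} ⟨λ⟩^b (r−t+λ)^{a−1} dλ ≤ C r^a ⟨t+r⟩^b, where ⟨λ⟩ = 1 + |λ|. -/
open MeasureTheory

lemma aux_int (p e c d : ℝ) (hp : -1 < p) (hec : 0 ≤ e + c) (hcd : c ≤ d) :
    IntegrableOn (fun x => (e + x) ^ p) (Set.Ioc c d) ∧
    ∫ x in Set.Ioc c d, (e + x) ^ p ≤ (e + d) ^ (p + 1) / (p + 1) := by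
  have hbase : IntervalIntegrable (fun x : ℝ => x ^ p) volume (e + c) (e + d) :=
    intervalIntegral.intervalIntegrable_rpow' hp
  have hcomp : IntervalIntegrable (fun x : ℝ => (e + x) ^ p) volume c d := by
    simpa using hbase.comp_add_left e
  have hii : IntegrableOn (fun x => (e + x) ^ p) (Set.Ioc c d) :=
    (intervalIntegrable_iff_integrableOn_Ioc_of_le hcd).mp hcomp
  refine ⟨hii, ?_⟩
  have h1 : ∫ x in Set.Ioc c d, (e + x) ^ p = ∫ x in c..d, (e + x) ^ p :=
    (intervalIntegral.integral_of_le hcd).symm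
  have h2 : (∫ x in c..d, (e + x) ^ p) = ∫ x in (e+c)..(e+d), x ^ p :=
    intervalIntegral.integral_comp_add_left (fun x : ℝ => x ^ p) e
  have h3 : (∫ x in (e+c)..(e+d), x ^ p) = ((e+d) ^ (p+1) - (e+c) ^ (p+1)) / (p+1) :=
    integral_rpow (Or.inl hp)
  rw [h1, h2, h3]
  have : 0 ≤ (e + c) ^ (p + 1) := Real.rpow_nonneg hec _
  have hp1 : 0 < p + 1 := by linarith
  gcongr
  linarith

lemma bound_step (l u e p K : ℝ) (hp : -1 < p) (hel : 0 ≤ e + l) (hlu : l ≤ u)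
    (hK : 0 ≤ K) (f : ℝ → ℝ) (hf0 : ∀ x ∈ Set.Ioc l u, 0 ≤ f x)
    (hfg : ∀ x ∈ Set.Ioc l u, f x ≤ K * (e + x) ^ p) :
    ∫ x in Set.Ioc l u, f x ≤ K * ((e + u) ^ (p + 1) / (p + 1)) := by
  obtain ⟨hint, hbd⟩ := aux_int p e l u hp hel hlu
  have hgint : Integrable (fun x => K * (e + x) ^ p) (volume.restrict (Set.Ioc l u)) :=
    hint.const_mul K
  calc ∫ x in Set.Ioc l u, f x
      ≤ ∫ x in Set.Ioc l u, K * (e + x) ^ p := by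
        refine integral_mono_of_nonneg ?_ hgint ?_
        · exact (ae_restrict_iff' measurableSet_Ioc).mpr (Filter.Eventually.of_forall hf0)
        · exact (ae_restrict_iff' measurableSet_Ioc).mpr (Filter.Eventually.of_forall hfg)
    _ = K * ∫ x in Set.Ioc l u, (e + x) ^ p := integral_const_mul K _
    _ ≤ K * ((e + u) ^ (p + 1) / (p + 1)) := mul_le_mul_of_nonneg_left hbd hK

lemma key_helper (A Z w X Y s u : ℝ) (hA : 0 ≤ A) (hZ : Z ≤ X * Y) (hXY : 0 ≤ X * Y)
    (hw : w ≤ s + u) (hw0 : 0 ≤ w) :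
    A * Z * w ≤ A * X * Y * (s + u) := by
  calc A * Z * w = A * (Z * w) := by ring
    _ ≤ A * ((X * Y) * (s + u)) :=
        mul_le_mul_of_nonneg_left (mul_le_mul hZ hw hw0 hXY) hA
    _ = A * X * Y * (s + u) := by ring

/-- For a > 0, b > −a, there is C with
∫_{|t−r|}^{t+r} ⟨λ⟩^b (r−t+λ)^{a−1} dλ ≤ C r^a ⟨t+r⟩^b for all r, t > 0. -/
theorem stmt_10 (a b : ℝ) (ha : 0 < a) (hb : -a < b) :
    ∃ C : ℝ, 0 < C ∧ ∀ r t : ℝ, 0 < r → 0 < t →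
      (∫ lam in Set.Ioc |t - r| (t + r),
          (1 + |lam|) ^ b * (r - t + lam) ^ (a - 1)) ≤
        C * r ^ a * (1 + |t + r|) ^ b := by
  have hab : 0 < a + b := by linarith
  have h2a : (0:ℝ) < 2 ^ a := Real.rpow_pos_of_pos two_pos a
  have h2b : (1:ℝ) ≤ 2 ^ |b| := Real.one_le_rpow one_le_two (abs_nonneg b)
  have h4b : (1:ℝ) ≤ 4 ^ |b| := Real.one_le_rpow (by norm_num) (abs_nonneg b)
  have hia : (0:ℝ) < 1/a := by positivity
  have hiab : (0:ℝ) < 1/(a+b) := by positivity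
  have h2bp : (0:ℝ) < 2 ^ |b| := Real.rpow_pos_of_pos two_pos _
  have h4bp : (0:ℝ) < 4 ^ |b| := Real.rpow_pos_of_pos (by norm_num) _
  have h24 : (1:ℝ) ≤ 2 ^ |b| * 4 ^ |b| := by
    calc (1:ℝ) = 1 * 1 := (one_mul 1).symm
      _ ≤ 2 ^ |b| * 4 ^ |b| := mul_le_mul h2b h4b one_pos.le (by linarith)
  refine ⟨2 ^ a * 2 ^ |b| * 4 ^ |b| * (1/a + 1/(a+b)),
    mul_pos (mul_pos (mul_pos h2a h2bp) h4bp) (by linarith), ?_⟩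
  intro r t hr ht
  have hlu : |t - r| ≤ t + r := abs_le.mpr ⟨by linarith, by linarith⟩
  have hl0 : (0:ℝ) ≤ |t - r| := abs_nonneg _
  have htr : t - r ≤ |t - r| := le_abs_self _
  have hrt : r - t ≤ |t - r| := by rw [abs_sub_comm]; exact le_abs_self _
  have hel : 0 ≤ (r - t) + |t - r| := by linarith
  have habs : |t + r| = t + r := abs_of_pos (by linarith)
  rw [habs]
  have hu1 : (0:ℝ) < 1 + (t + r) := by linarith
  have hub : (0:ℝ) < (1 + (t + r)) ^ b := Real.rpow_pos_of_pos hu1 b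
  have hra : (0:ℝ) < r ^ a := Real.rpow_pos_of_pos hr a
  have h2r : ((2:ℝ) * r) ^ a = 2 ^ a * r ^ a := Real.mul_rpow (by norm_num) hr.le
  have hf0 : ∀ x ∈ Set.Ioc |t - r| (t + r),
      0 ≤ (1 + |x|) ^ b * (r - t + x) ^ (a - 1) := by
    intro x hx
    exact mul_nonneg (Real.rpow_nonneg (by positivity) b)
      (Real.rpow_nonneg (by linarith [hx.1]) _)
  rcases le_or_gt 0 b with hb0 | hb0
  · -- case b ≥ 0
    have step := bound_step |t - r| (t + r) (r - t) (a - 1) ((1 + (t + r)) ^ b)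
      (by linarith) hel hlu hub.le _ hf0 ?_
    · refine step.trans ?_
      have he : (r - t) + (t + r) = 2 * r := by ring
      have hae : a - 1 + 1 = a := by ring
      rw [he, hae, h2r]
      have key : (2:ℝ) ^ a * (1/a) ≤ 2 ^ a * 2 ^ |b| * 4 ^ |b| * (1/a + 1/(a+b)) := by
        calc (2:ℝ) ^ a * (1/a) = 2 ^ a * 1 * (1/a) := by ring
          _ ≤ 2 ^ a * 2 ^ |b| * 4 ^ |b| * (1/a + 1/(a+b)) :=
              key_helper (2^a) 1 (1/a) (2^|b|) (4^|b|) (1/a) (1/(a+b)) h2a.le h24 (by linarith) (by linarith) hia.le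
          _ = 2 ^ a * 2 ^ |b| * 4 ^ |b| * (1/a + 1/(a+b)) := by ring
      calc (1 + (t + r)) ^ b * (2 ^ a * r ^ a / a)
          = (2 ^ a * (1/a)) * (r ^ a * (1 + (t + r)) ^ b) := by ring
        _ ≤ (2 ^ a * 2 ^ |b| * 4 ^ |b| * (1/a + 1/(a+b))) * (r ^ a * (1 + (t + r)) ^ b) := by
            apply mul_le_mul_of_nonneg_right key (by positivity)
        _ = 2 ^ a * 2 ^ |b| * 4 ^ |b| * (1/a + 1/(a+b)) * r ^ a * (1 + (t + r)) ^ b := by ring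
    · intro x hx
      have hx0 : 0 < x := lt_of_le_of_lt hl0 hx.1
      rw [abs_of_pos hx0]
      exact mul_le_mul_of_nonneg_right
        (Real.rpow_le_rpow (by linarith) (by linarith [hx.2]) hb0)
        (Real.rpow_nonneg (by linarith [hx.1]) _)
  · -- case b < 0
    have hnb : |b| = -b := abs_of_neg hb0
    rcases le_total (4 * r) (1 + (t + r)) with h4 | h4
    · -- far case: 4r ≤ 1+t+r
      have hK : (0:ℝ) ≤ 2 ^ (-b) * (1 + (t + r)) ^ b := by positivity
      have step := bound_step |t - r| (t + r) (r - t) (a - 1)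
        ((2:ℝ) ^ (-b) * (1 + (t + r)) ^ b) (by linarith) hel hlu hK _ hf0 ?_
      · refine step.trans ?_
        have he : (r - t) + (t + r) = 2 * r := by ring
        have hae : a - 1 + 1 = a := by ring
        rw [he, hae, h2r]
        have key : (2:ℝ) ^ (-b) * 2 ^ a * (1/a) ≤ 2 ^ a * 2 ^ |b| * 4 ^ |b| * (1/a + 1/(a+b)) := by
          rw [hnb]
          have hZ : (2:ℝ) ^ (-b) ≤ 2 ^ (-b) * 4 ^ (-b) :=
            le_mul_of_one_le_right (Real.rpow_pos_of_pos two_pos _).le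
              (Real.one_le_rpow (by norm_num) (by linarith))
          calc (2:ℝ) ^ (-b) * 2 ^ a * (1/a) = 2 ^ a * 2 ^ (-b) * (1/a) := by ring
            _ ≤ 2 ^ a * 2 ^ (-b) * 4 ^ (-b) * (1/a + 1/(a+b)) :=
                key_helper (2^a) (2^(-b)) (1/a) (2^(-b)) (4^(-b)) (1/a) (1/(a+b)) h2a.le hZ (by positivity) (by linarith) hia.le
            _ = 2 ^ a * 2 ^ (-b) * 4 ^ (-b) * (1/a + 1/(a+b)) := by ring
        calc 2 ^ (-b) * (1 + (t + r)) ^ b * (2 ^ a * r ^ a / a)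
            = (2 ^ (-b) * 2 ^ a * (1/a)) * (r ^ a * (1 + (t + r)) ^ b) := by ring
          _ ≤ (2 ^ a * 2 ^ |b| * 4 ^ |b| * (1/a + 1/(a+b))) * (r ^ a * (1 + (t + r)) ^ b) := by
              apply mul_le_mul_of_nonneg_right key (by positivity)
          _ = 2 ^ a * 2 ^ |b| * 4 ^ |b| * (1/a + 1/(a+b)) * r ^ a * (1 + (t + r)) ^ b := by ring
      · intro x hx
        have hx0 : 0 < x := lt_of_le_of_lt hl0 hx.1
        rw [abs_of_pos hx0]
        have h1 : (1 + (t + r)) / 2 ≤ 1 + x := by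
          have := hx.1; linarith
        have h2 : (1 + x) ^ b ≤ ((1 + (t + r)) / 2) ^ b :=
          Real.rpow_le_rpow_of_nonpos (by linarith) h1 hb0.le
        have h3 : ((1 + (t + r)) / 2) ^ b = 2 ^ (-b) * (1 + (t + r)) ^ b := by
          rw [Real.div_rpow hu1.le (by norm_num), Real.rpow_neg (by norm_num)]
          ring
        rw [h3] at h2
        exact mul_le_mul_of_nonneg_right h2 (Real.rpow_nonneg (by linarith [hx.1]) _)
    · -- near case: 1+t+r ≤ 4r
      have hK : (0:ℝ) ≤ (2:ℝ) ^ (-b) := (Real.rpow_pos_of_pos two_pos _).le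
      have step := bound_step |t - r| (t + r) (r - t) (a + b - 1)
        ((2:ℝ) ^ (-b)) (by linarith) hel hlu hK _ hf0 ?_
      · refine step.trans ?_
        have he : (r - t) + (t + r) = 2 * r := by ring
        have hae : a + b - 1 + 1 = a + b := by ring
        rw [he, hae]
        have h2rab : ((2:ℝ) * r) ^ (a + b) = 2 ^ (a + b) * (r ^ a * r ^ b) := by
          rw [Real.mul_rpow (by norm_num) hr.le, Real.rpow_add hr]
        rw [h2rab]
        -- r ^ b ≤ 4 ^ (-b) * (1 + (t+r)) ^ b
        have h4r : ((4:ℝ) * r) ^ b ≤ (1 + (t + r)) ^ b :=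
          Real.rpow_le_rpow_of_nonpos hu1 h4 hb0.le
        have h4rb : ((4:ℝ) * r) ^ b = 4 ^ b * r ^ b := Real.mul_rpow (by norm_num) hr.le
        have h4bpos : (0:ℝ) < (4:ℝ) ^ b := Real.rpow_pos_of_pos (by norm_num) b
        have hrb : r ^ b ≤ 4 ^ (-b) * (1 + (t + r)) ^ b := by
          rw [Real.rpow_neg (by norm_num : (0:ℝ) ≤ 4)]
          rw [h4rb] at h4r
          have hid : r ^ b = ((4:ℝ) ^ b)⁻¹ * (4 ^ b * r ^ b) := by
            field_simp
          rw [hid]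
          exact mul_le_mul_of_nonneg_left h4r (by positivity)
        have h2ab : (2:ℝ) ^ (-b) * 2 ^ (a + b) = 2 ^ a := by
          rw [← Real.rpow_add two_pos]; norm_num
        have key : (2:ℝ) ^ a * 4 ^ (-b) * (1/(a+b)) ≤ 2 ^ a * 2 ^ |b| * 4 ^ |b| * (1/a + 1/(a+b)) := by
          rw [hnb]
          have hZ : (4:ℝ) ^ (-b) ≤ 2 ^ (-b) * 4 ^ (-b) :=
            le_mul_of_one_le_left (Real.rpow_pos_of_pos (by norm_num) _).le
              (Real.one_le_rpow one_le_two (by linarith))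
          calc (2:ℝ) ^ a * 4 ^ (-b) * (1/(a+b))
              ≤ 2 ^ a * 2 ^ (-b) * 4 ^ (-b) * (1/a + 1/(a+b)) :=
                key_helper (2^a) (4^(-b)) (1/(a+b)) (2^(-b)) (4^(-b)) (1/a) (1/(a+b)) h2a.le hZ (by positivity) (by linarith) hiab.le
            _ = 2 ^ a * 2 ^ (-b) * 4 ^ (-b) * (1/a + 1/(a+b)) := by ring
        calc 2 ^ (-b) * (2 ^ (a + b) * (r ^ a * r ^ b) / (a + b))
            = (2 ^ (-b) * 2 ^ (a + b)) * (1/(a+b)) * r ^ a * r ^ b := by ring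
          _ = 2 ^ a * (1/(a+b)) * r ^ a * r ^ b := by rw [h2ab]
          _ ≤ 2 ^ a * (1/(a+b)) * r ^ a * (4 ^ (-b) * (1 + (t + r)) ^ b) := by
              apply mul_le_mul_of_nonneg_left hrb (by positivity)
          _ = (2 ^ a * 4 ^ (-b) * (1/(a+b))) * (r ^ a * (1 + (t + r)) ^ b) := by ring
          _ ≤ (2 ^ a * 2 ^ |b| * 4 ^ |b| * (1/a + 1/(a+b))) * (r ^ a * (1 + (t + r)) ^ b) := by
              apply mul_le_mul_of_nonneg_right key (by positivity)
          _ = 2 ^ a * 2 ^ |b| * 4 ^ |b| * (1/a + 1/(a+b)) * r ^ a * (1 + (t + r)) ^ b := by ring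
      · intro x hx
        have hx0 : 0 < x := lt_of_le_of_lt hl0 hx.1
        have hex : 0 < r - t + x := by linarith [hx.1]
        rw [abs_of_pos hx0]
        have h1 : (r - t + x) / 2 ≤ 1 + x := by linarith [hx.1]
        have h2 : (1 + x) ^ b ≤ ((r - t + x) / 2) ^ b :=
          Real.rpow_le_rpow_of_nonpos (by linarith) h1 hb0.le
        have h3 : ((r - t + x) / 2) ^ b = 2 ^ (-b) * (r - t + x) ^ b := by
          rw [Real.div_rpow hex.le (by norm_num), Real.rpow_neg (by norm_num)]
          ring
        rw [h3] at h2
        have h4' : (1 + x) ^ b * (r - t + x) ^ (a - 1)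
            ≤ 2 ^ (-b) * (r - t + x) ^ b * (r - t + x) ^ (a - 1) :=
          mul_le_mul_of_nonneg_right h2 (Real.rpow_nonneg hex.le _)
        refine h4'.trans_eq ?_
        rw [mul_assoc, ← Real.rpow_add hex]
        ring_nf
end

section
/- Let a > 0 and b = −a. Then there is a constant C = C(a) such that for all r, t > 0, ∫_{|t−r|}^{t+r} ⟨λ⟩^{−a} (r−t+λ)^{a−1} dλ ≤ C r^a ⟨t+r⟩^{−a} (1 + ln(⟨t+r⟩/⟨t−r⟩)), where ⟨λ⟩ = 1+|λ|. -/
/-!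
With `c = t - r` the integrand is `(1 + λ)^(-a) (λ - c)^(a - 1)` on `[|c|, t + r]`, and `λ - c`
runs up to `2r`. If `4r ≤ ⟨t + r⟩`, then `1 + λ ≥ ⟨t + r⟩ / 2` on the whole range, so the
integral is at most `2^a ⟨t + r⟩^(-a) (2r)^a / a`. Otherwise `r^a ⟨t + r⟩^(-a)` is bounded below
and the integral only has to be bounded by a multiple of `1 + log (⟨t + r⟩ / ⟨t - r⟩)`: while
`λ - c ≤ ⟨t - r⟩` bound the weight by `⟨t - r⟩^(-a)`, beyond that bound the integrand by
`2^a / (λ - c)`, whose integral is the logarithm.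
-/

open MeasureTheory intervalIntegral

noncomputable def decayKernel (a c x : ℝ) : ℝ := (1 + x) ^ (-a) * (x - c) ^ (a - 1)

lemma rpow_neg_mul_rpow_sub_one_le {a k y z : ℝ} (ha : 0 ≤ a) (hk : 0 < k) (hy : 0 < y)
    (hyz : y ≤ k * z) : z ^ (-a) * y ^ (a - 1) ≤ k ^ a * y⁻¹ := by
  have hz : y / k ≤ z := (div_le_iff₀' hk).mpr hyz
  calc z ^ (-a) * y ^ (a - 1) ≤ (y / k) ^ (-a) * y ^ (a - 1) :=
        mul_le_mul_of_nonneg_right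
          (Real.rpow_le_rpow_of_nonpos (by positivity) hz (by linarith)) (by positivity)
    _ = k ^ a * (y ^ (-a) * y ^ (a - 1)) := by
        rw [Real.div_rpow hy.le hk.le, Real.rpow_neg hk.le, div_inv_eq_mul]; ring
    _ = k ^ a * y⁻¹ := by
        rw [← Real.rpow_add hy, show -a + (a - 1) = -1 by ring, Real.rpow_neg_one]

lemma intervalIntegrable_sub_rpow {p : ℝ} (hp : -1 < p) (c x y : ℝ) :
    IntervalIntegrable (fun t => (t - c) ^ p) volume x y := by
  simpa using (intervalIntegrable_rpow' (a := x - c) (b := y - c) hp).comp_sub_right c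

lemma integral_sub_rpow_sub_one_le {a c x : ℝ} (ha : 0 < a) (hcx : c ≤ x) (y : ℝ) :
    ∫ t in x..y, (t - c) ^ (a - 1) ≤ (y - c) ^ a / a := by
  rw [integral_comp_sub_right (fun t => t ^ (a - 1)), integral_rpow (Or.inl (by linarith)),
    sub_add_cancel]
  gcongr
  exact sub_le_self _ (Real.rpow_nonneg (sub_nonneg.mpr hcx) a)

lemma intervalIntegrable_decayKernel {a : ℝ} (ha : 0 < a) (c : ℝ) {x y : ℝ} (hx : 0 < 1 + x)
    (hxy : x ≤ y) : IntervalIntegrable (decayKernel a c) volume x y := by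
  refine (intervalIntegrable_sub_rpow (by linarith) c x y).continuousOn_mul ?_
  refine ContinuousOn.rpow_const (by fun_prop) fun t ht => Or.inl ?_
  rw [Set.uIcc_of_le hxy] at ht
  linarith [ht.1]

lemma integral_decayKernel_le_of_le {a c w x y : ℝ} (ha : 0 < a) (hw : 0 < w) (hwx : w ≤ 1 + x)
    (hcx : c ≤ x) (hxy : x ≤ y) :
    ∫ t in x..y, decayKernel a c t ≤ ((y - c) / w) ^ a / a := by
  calc ∫ t in x..y, decayKernel a c t ≤ ∫ t in x..y, w ^ (-a) * (t - c) ^ (a - 1) := by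
        refine integral_mono_on hxy (intervalIntegrable_decayKernel ha c (by linarith) hxy)
          ((intervalIntegrable_sub_rpow (by linarith) c x y).const_mul _) fun t ht => ?_
        exact mul_le_mul_of_nonneg_right
          (Real.rpow_le_rpow_of_nonpos hw (by linarith [ht.1]) (by linarith))
          (Real.rpow_nonneg (by linarith [ht.1]) _)
    _ ≤ w ^ (-a) * ((y - c) ^ a / a) := by
        rw [intervalIntegral.integral_const_mul]
        exact mul_le_mul_of_nonneg_left (integral_sub_rpow_sub_one_le ha hcx y) (by positivity)
    _ = ((y - c) / w) ^ a / a := by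
        rw [Real.div_rpow (by linarith) hw.le, Real.rpow_neg hw.le]; ring

lemma integral_decayKernel_le_log {a c x y : ℝ} (ha : 0 < a) (hcx : c < x)
    (hx : x - c ≤ 2 * (1 + x)) (hxy : x ≤ y) :
    ∫ t in x..y, decayKernel a c t ≤ 2 ^ a * Real.log ((y - c) / (x - c)) := by
  have hinv : IntervalIntegrable (fun t => (t - c)⁻¹) volume x y := by
    refine (ContinuousOn.inv₀ (by fun_prop) fun t ht => ?_).intervalIntegrable
    rw [Set.uIcc_of_le hxy] at ht
    linarith [ht.1]
  calc ∫ t in x..y, decayKernel a c t ≤ ∫ t in x..y, 2 ^ a * (t - c)⁻¹ := by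
        refine integral_mono_on hxy (intervalIntegrable_decayKernel ha c (by linarith) hxy)
          (hinv.const_mul _) fun t ht => ?_
        exact rpow_neg_mul_rpow_sub_one_le ha.le two_pos (by linarith [ht.1])
          (by linarith [ht.1])
    _ = 2 ^ a * Real.log ((y - c) / (x - c)) := by
        rw [intervalIntegral.integral_const_mul, integral_comp_sub_right (fun t => t⁻¹),
          integral_inv]
        rw [Set.uIcc_of_le (by linarith)]
        exact fun h => (not_le.mpr (sub_pos.mpr hcx)) h.1

section
variable {a c A B : ℝ}

lemma integral_decayKernel_le_of_two_mul_le (ha : 0 < a) (hA : 0 ≤ A) (hcA : c ≤ A) (hAB : A ≤ B)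
    (hBc : 2 * (B - c) ≤ 1 + B) :
    ∫ t in A..B, decayKernel a c t ≤ 2 ^ a * ((B - c) / (1 + B)) ^ a / a := by
  calc ∫ t in A..B, decayKernel a c t ≤ ((B - c) / ((1 + B) / 2)) ^ a / a :=
        integral_decayKernel_le_of_le ha (by linarith) (by linarith) hcA hAB
    _ = 2 ^ a * ((B - c) / (1 + B)) ^ a / a := by
        have h : (B - c) / ((1 + B) / 2) = 2 * ((B - c) / (1 + B)) := by
          field_simp
        rw [h, Real.mul_rpow zero_le_two (div_nonneg (by linarith) (by linarith))]

lemma integral_decayKernel_le_log_div (ha : 0 < a) (hcA : |c| ≤ A) (hAB : A ≤ B) (hcB : c < B) :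
    ∫ t in A..B, decayKernel a c t ≤
      2 ^ a * (a⁻¹ + 1) * (1 + Real.log ((1 + B) / (1 + A))) := by
  have hc := abs_le.mp hcA
  set L := Real.log ((1 + B) / (1 + A))
  have hL : 0 ≤ L := Real.log_nonneg ((one_le_div (by linarith)).mpr (by linarith))
  -- split where `t - c` reaches the scale `1 + A`, clamped into `[A - c, B - c]`
  set m := max (A - c) (min (B - c) (1 + A))
  have hm : 0 < m := lt_max_of_lt_right (lt_min (by linarith) (by linarith))
  have hmA : m ≤ 2 * (1 + A) := max_le (by linarith) ((min_le_right _ _).trans (by linarith))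
  have hBm : (B - c) * (1 + A) ≤ 2 * (1 + B) * m := by
    refine le_trans ?_ (mul_le_mul_of_nonneg_left (le_max_right _ _) (by linarith))
    rcases min_cases (B - c) (1 + A) with ⟨h, -⟩ | ⟨h, -⟩ <;> rw [h] <;> nlinarith
  have hAs : A ≤ c + m := by linarith [le_max_left (A - c) (min (B - c) (1 + A))]
  have hsB : c + m ≤ B := by
    linarith [(max_le (by linarith) (min_le_left _ _) : m ≤ B - c)]
  have near : ∫ t in A..c + m, decayKernel a c t ≤ 2 ^ a / a := by
    refine (integral_decayKernel_le_of_le ha (by linarith) le_rfl hc.2 hAs).trans ?_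
    have h : (c + m - c) / (1 + A) ≤ 2 := by
      rw [add_sub_cancel_left, div_le_iff₀ (by linarith)]
      exact hmA
    exact div_le_div_of_nonneg_right
      (Real.rpow_le_rpow (div_nonneg (by linarith) (by linarith)) h ha.le) ha.le
  have far : ∫ t in c + m..B, decayKernel a c t ≤ 2 ^ a * (Real.log 2 + L) := by
    refine (integral_decayKernel_le_log ha (by linarith) (by linarith) hsB).trans ?_
    have h : (B - c) / (c + m - c) ≤ 2 * ((1 + B) / (1 + A)) := by
      rw [add_sub_cancel_left, div_le_iff₀ hm, mul_div_assoc', div_mul_eq_mul_div,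
        le_div_iff₀ (by linarith)]
      exact hBm
    have hlog := Real.log_le_log (div_pos (by linarith) (by linarith)) h
    rw [Real.log_mul two_ne_zero (div_pos (by linarith) (by linarith)).ne'] at hlog
    exact mul_le_mul_of_nonneg_left hlog (by positivity)
  rw [← integral_add_adjacent_intervals
    (intervalIntegrable_decayKernel ha c (by linarith) hAs)
    (intervalIntegrable_decayKernel ha c (by linarith) hsB)]
  have hlog2 : Real.log 2 ≤ 1 := by linarith [Real.log_two_lt_d9]
  have h2a : (0 : ℝ) < 2 ^ a := by positivity
  have hLa : 0 ≤ a⁻¹ * L := mul_nonneg (inv_nonneg.mpr ha.le) hL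
  calc _ ≤ 2 ^ a / a + 2 ^ a * (Real.log 2 + L) := add_le_add near far
    _ ≤ 2 ^ a * (a⁻¹ + 1) * (1 + L) := by
        rw [div_eq_mul_inv]
        nlinarith [mul_le_mul_of_nonneg_left hlog2 h2a.le, mul_nonneg h2a.le hLa]

lemma integral_decayKernel_le (ha : 0 < a) (hcA : |c| ≤ A) (hAB : A ≤ B) (hcB : c < B) :
    ∫ t in A..B, decayKernel a c t ≤
      4 ^ a * (a⁻¹ + 1) * ((B - c) / (1 + B)) ^ a * (1 + Real.log ((1 + B) / (1 + A))) := by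
  have hc := abs_le.mp hcA
  set L := Real.log ((1 + B) / (1 + A))
  have hL : 0 ≤ L := Real.log_nonneg ((one_le_div (by linarith)).mpr (by linarith))
  set q := (B - c) / (1 + B)
  have hq : 0 ≤ q := div_nonneg (by linarith) (by linarith)
  have h24 : (2 : ℝ) ^ a ≤ 4 ^ a := Real.rpow_le_rpow zero_le_two (by norm_num) ha.le
  have hainv : 0 ≤ a⁻¹ := inv_nonneg.mpr ha.le
  rcases le_or_gt (2 * (B - c)) (1 + B) with hBc | hBc
  · refine (integral_decayKernel_le_of_two_mul_le ha (abs_nonneg c |>.trans hcA) hc.2 hAB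
      hBc).trans ?_
    have h : a⁻¹ ≤ (a⁻¹ + 1) * (1 + L) := by nlinarith [mul_nonneg hainv hL]
    calc 2 ^ a * q ^ a / a = 2 ^ a * a⁻¹ * q ^ a := by ring
      _ ≤ 4 ^ a * ((a⁻¹ + 1) * (1 + L)) * q ^ a := by gcongr
      _ = _ := by ring
  · refine (integral_decayKernel_le_log_div ha hcA hAB hcB).trans ?_
    have h : (2 : ℝ) ^ a ≤ 4 ^ a * q ^ a := by
      rw [← Real.mul_rpow (by norm_num) hq]
      refine Real.rpow_le_rpow zero_le_two ?_ ha.le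
      rw [mul_div_assoc', le_div_iff₀ (by linarith)]
      linarith
    calc 2 ^ a * (a⁻¹ + 1) * (1 + L) ≤ 4 ^ a * q ^ a * (a⁻¹ + 1) * (1 + L) := by gcongr
      _ = _ := by ring

end

/-- For a > 0, there is C with
∫_{|t−r|}^{t+r} ⟨λ⟩^{−a}(r−t+λ)^{a−1} dλ ≤ C r^a ⟨t+r⟩^{−a}(1+ln(⟨t+r⟩/⟨t−r⟩)). -/
theorem stmt_11 (a : ℝ) (ha : 0 < a) :
    ∃ C : ℝ, 0 < C ∧ ∀ r t : ℝ, 0 < r → 0 < t →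
      (∫ lam in Set.Ioc |t - r| (t + r),
          (1 + |lam|) ^ (-a) * (r - t + lam) ^ (a - 1)) ≤
        C * r ^ a * (1 + |t + r|) ^ (-a) *
          (1 + Real.log ((1 + |t + r|) / (1 + |t - r|))) := by
  refine ⟨4 ^ a * (a⁻¹ + 1) * 2 ^ a, by positivity, fun r t hr ht => ?_⟩
  have hAB : |t - r| ≤ t + r := abs_sub_le_iff.mpr ⟨by linarith, by linarith⟩
  have hintegral : ∫ lam in Set.Ioc |t - r| (t + r), (1 + |lam|) ^ (-a) * (r - t + lam) ^ (a - 1)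
      = ∫ lam in |t - r|..t + r, decayKernel a (t - r) lam := by
    rw [intervalIntegral.integral_of_le hAB]
    refine setIntegral_congr_fun measurableSet_Ioc fun lam hlam => ?_
    rw [decayKernel, abs_of_nonneg ((abs_nonneg _).trans hlam.1.le),
      show r - t + lam = lam - (t - r) by ring]
  have hratio :
      ((t + r - (t - r)) / (1 + (t + r))) ^ a = 2 ^ a * r ^ a * (1 + (t + r)) ^ (-a) := by
    rw [show t + r - (t - r) = 2 * r by ring, Real.div_rpow (by positivity) (by positivity),
      Real.mul_rpow zero_le_two hr.le, Real.rpow_neg (by positivity), div_eq_mul_inv]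
  rw [hintegral, abs_of_pos (by linarith : 0 < t + r)]
  refine (integral_decayKernel_le ha le_rfl hAB (by linarith)).trans (le_of_eq ?_)
  rw [hratio]
  ring
end

section
/- Let a > 0 and b < −a. Then there is a constant C = C(a,b) such that for all r, t > 0, ∫_{|t−r|}^{t+r} ⟨λ⟩^b (r−t+λ)^{a−1} dλ ≤ C r^a ⟨t+r⟩^{−a} ⟨t−r⟩^{a+b}, where ⟨λ⟩ = 1+|λ|. -/
open MeasureTheory Set Real

lemma shift_ii {a : ℝ} (ha : 0 < a) (c p q : ℝ) :
    IntervalIntegrable (fun x => (x + c) ^ (a - 1)) volume p q := by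
  have h := (intervalIntegral.intervalIntegrable_rpow' (r := a - 1) (by linarith)
      (a := p + c) (b := q + c)).comp_add_right c
  simpa using h

lemma f_ii {a b : ℝ} (ha : 0 < a) (c p q : ℝ) :
    IntervalIntegrable (fun lam => (1 + |lam|) ^ b * (lam + c) ^ (a - 1)) volume p q := by
  apply (shift_ii ha c p q).continuousOn_mul
  apply ContinuousOn.rpow_const
  · exact (continuous_const.add continuous_abs).continuousOn
  · intro x _
    left
    positivity

lemma mono_aux {p q : ℝ} {f g : ℝ → ℝ} (hf : ∀ x ∈ Ioc p q, 0 ≤ f x)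
    (hfg : ∀ x ∈ Ioc p q, f x ≤ g x) (hg : IntegrableOn g (Ioc p q)) :
    ∫ x in Ioc p q, f x ≤ ∫ x in Ioc p q, g x := by
  apply integral_mono_of_nonneg _ hg
  · exact (ae_restrict_iff' measurableSet_Ioc).2 (Filter.Eventually.of_forall hfg)
  · exact (ae_restrict_iff' measurableSet_Ioc).2 (Filter.Eventually.of_forall hf)

lemma lemA {a b : ℝ} (ha : 0 < a) (hb : b ≤ 0) {c p q : ℝ} (hp : 0 ≤ p) (hpq : p ≤ q)
    (hc : 0 ≤ p + c) :
    ∫ lam in Ioc p q, (1 + |lam|) ^ b * (lam + c) ^ (a - 1)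
      ≤ (1 + p) ^ b * ((q + c) ^ a / a) := by
  have key : (∫ lam in Ioc p q, (1 + |lam|) ^ b * (lam + c) ^ (a - 1))
      ≤ ∫ lam in Ioc p q, (1 + p) ^ b * (lam + c) ^ (a - 1) := by
    apply mono_aux
    · intro x hx
      have h1 : 0 ≤ x + c := by nlinarith [hx.1]
      positivity
    · intro x hx
      apply mul_le_mul_of_nonneg_right
      · rw [abs_of_nonneg (le_trans hp hx.1.le)]
        exact rpow_le_rpow_of_nonpos (by linarith) (by linarith [hx.1]) hb
      · exact rpow_nonneg (by nlinarith [hx.1]) _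
    · exact ((shift_ii ha c p q).const_mul _).1
  rw [MeasureTheory.integral_const_mul] at key
  have comp : (∫ lam in Ioc p q, (lam + c) ^ (a - 1)) = ((q + c) ^ a - (p + c) ^ a) / a := by
    rw [← intervalIntegral.integral_of_le hpq,
      intervalIntegral.integral_comp_add_right (fun x => x ^ (a - 1)) c,
      integral_rpow (Or.inl (by linarith))]
    norm_num
  rw [comp] at key
  refine key.trans ?_
  have h2 : 0 ≤ (p + c) ^ a := rpow_nonneg hc _
  have h3 : (0:ℝ) ≤ (1 + p) ^ b := rpow_nonneg (by linarith) _
  have h4 : ((q + c) ^ a - (p + c) ^ a) / a ≤ (q + c) ^ a / a :=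
    div_le_div_of_nonneg_right (by linarith) ha.le
  calc (1 + p) ^ b * (((q + c) ^ a - (p + c) ^ a) / a)
      ≤ (1 + p) ^ b * ((q + c) ^ a / a) := mul_le_mul_of_nonneg_left h4 h3
  -- done

lemma tail {a b K : ℝ} (ha : 0 < a) (hab : a + b < 0) {c p q : ℝ} (hpc : 0 < p + c)
    (hpq : p ≤ q) (hK : 0 ≤ K)
    (hcomp : ∀ x ∈ Ioc p q, (1 + |x|) ^ b ≤ K * (x + c) ^ b) :
    ∫ lam in Ioc p q, (1 + |lam|) ^ b * (lam + c) ^ (a - 1)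
      ≤ K * ((p + c) ^ (a + b) / (-(a + b))) := by
  have hqc : 0 < q + c := by linarith
  have hnm : (0:ℝ) ∉ Set.uIcc (p + c) (q + c) := Set.notMem_uIcc_of_lt hpc hqc
  have key : (∫ lam in Ioc p q, (1 + |lam|) ^ b * (lam + c) ^ (a - 1))
      ≤ ∫ lam in Ioc p q, K * (lam + c) ^ (a + b - 1) := by
    apply mono_aux
    · intro x hx
      have h1 : 0 ≤ x + c := by nlinarith [hx.1]
      positivity
    · intro x hx
      have hxc : 0 < x + c := by nlinarith [hx.1]
      calc (1 + |x|) ^ b * (x + c) ^ (a - 1)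
          ≤ (K * (x + c) ^ b) * (x + c) ^ (a - 1) :=
            mul_le_mul_of_nonneg_right (hcomp x hx) (rpow_nonneg hxc.le _)
        _ = K * (x + c) ^ (a + b - 1) := by
            rw [mul_assoc, ← rpow_add hxc]
            ring_nf
    · have h := ((intervalIntegral.intervalIntegrable_rpow (r := a + b - 1)
        (μ := volume) (a := p + c) (b := q + c) (Or.inr hnm)).comp_add_right c)
      simp only [add_sub_cancel_right] at h
      exact (h.const_mul K).1
  rw [MeasureTheory.integral_const_mul] at key
  have comp : (∫ lam in Ioc p q, (lam + c) ^ (a + b - 1))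
      = ((q + c) ^ (a + b) - (p + c) ^ (a + b)) / (a + b) := by
    rw [← intervalIntegral.integral_of_le hpq,
      intervalIntegral.integral_comp_add_right (fun x => x ^ (a + b - 1)) c,
      integral_rpow (Or.inr ⟨by intro h; rw [sub_eq_iff_eq_add] at h; linarith, hnm⟩)]
    norm_num
  rw [comp] at key
  refine key.trans ?_
  have heq : ((q + c) ^ (a + b) - (p + c) ^ (a + b)) / (a + b)
      = ((p + c) ^ (a + b) - (q + c) ^ (a + b)) / (-(a + b)) := by
    rw [div_neg, ← neg_div, neg_sub]
  rw [heq]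
  have h2 : 0 ≤ (q + c) ^ (a + b) := rpow_nonneg hqc.le _
  apply mul_le_mul_of_nonneg_left _ hK
  apply div_le_div_of_nonneg_right (by linarith) (by linarith)

lemma split_int {f : ℝ → ℝ} {p m q : ℝ} (h1 : p ≤ m) (h2 : m ≤ q)
    (hf : IntervalIntegrable f volume p q) :
    (∫ x in Ioc p q, f x) = (∫ x in Ioc p m, f x) + ∫ x in Ioc m q, f x := by
  have hm1 : IntervalIntegrable f volume p m := hf.mono_set (by
    rw [Set.uIcc_of_le h1, Set.uIcc_of_le (h1.trans h2)]
    exact Set.Icc_subset_Icc le_rfl h2)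
  have hm2 : IntervalIntegrable f volume m q := hf.mono_set (by
    rw [Set.uIcc_of_le h2, Set.uIcc_of_le (h1.trans h2)]
    exact Set.Icc_subset_Icc h1 le_rfl)
  rw [← intervalIntegral.integral_of_le (h1.trans h2), ← intervalIntegral.integral_of_le h1,
    ← intervalIntegral.integral_of_le h2,
    ← intervalIntegral.integral_add_adjacent_intervals hm1 hm2]

lemma final_step {a C K r X y J : ℝ} (hX : 0 < X) (hy : 0 ≤ y)
    (hJ : J ≤ K * y) (hKC : K * X ^ a ≤ C * r ^ a) :
    J ≤ C * r ^ a * X ^ (-a) * y := by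
  have hXa : (0:ℝ) < X ^ a := rpow_pos_of_pos hX a
  have hK : K ≤ C * r ^ a * X ^ (-a) := by
    have h := (le_div_iff₀ hXa).2 hKC
    calc K ≤ C * r ^ a / X ^ a := h
      _ = C * r ^ a * X ^ (-a) := by rw [rpow_neg hX.le, div_eq_mul_inv]
  exact hJ.trans (mul_le_mul_of_nonneg_right hK hy)

/-- For a > 0 and b < −a, there is C with
∫_{|t−r|}^{t+r} ⟨λ⟩^b (r−t+λ)^{a−1} dλ ≤ C r^a ⟨t+r⟩^{−a} ⟨t−r⟩^{a+b}. -/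
theorem stmt_12 (a b : ℝ) (ha : 0 < a) (hb : b < -a) :
    ∃ C : ℝ, 0 < C ∧ ∀ r t : ℝ, 0 < r → 0 < t →
      (∫ lam in Set.Ioc |t - r| (t + r),
          (1 + |lam|) ^ b * (r - t + lam) ^ (a - 1)) ≤
        C * r ^ a * (1 + |t + r|) ^ (-a) * (1 + |t - r|) ^ (a + b) := by
  have hab : a + b < 0 := by linarith
  have hnab : 0 < -(a + b) := by linarith
  have hb0 : b ≤ 0 := by linarith
  have h4a : (0:ℝ) < 4 ^ a := rpow_pos_of_pos (by norm_num) a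
  have h2b : (0:ℝ) < 2 ^ (-b) := rpow_pos_of_pos (by norm_num) _
  have h1a : 0 < 1 / a := by positivity
  have h1ab : 0 < 1 / (-(a + b)) := by positivity
  refine ⟨4 ^ a * ((2:ℝ) ^ (-b) + 1) * (1 / a + 1 / (-(a + b))), by positivity, ?_⟩
  set C := 4 ^ a * ((2:ℝ) ^ (-b) + 1) * (1 / a + 1 / (-(a + b))) with hCdef
  have hs : 0 < 1 / a + 1 / (-(a + b)) := by linarith
  have hg1 : 4 ^ a / a ≤ C := by
    rw [hCdef]
    calc 4 ^ a / a = 4 ^ a * 1 * (1 / a) := by ring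
      _ ≤ 4 ^ a * ((2:ℝ) ^ (-b) + 1) * (1 / a + 1 / (-(a + b))) :=
          mul_le_mul (mul_le_mul_of_nonneg_left (by linarith) h4a.le) (by linarith)
            h1a.le (by positivity)
  have hg2 : 4 ^ a * (1 / a + 1 / (-(a + b))) ≤ C := by
    rw [hCdef]
    calc 4 ^ a * (1 / a + 1 / (-(a + b))) = 4 ^ a * 1 * (1 / a + 1 / (-(a + b))) := by ring
      _ ≤ 4 ^ a * ((2:ℝ) ^ (-b) + 1) * (1 / a + 1 / (-(a + b))) :=
          mul_le_mul_of_nonneg_right (mul_le_mul_of_nonneg_left (by linarith) h4a.le) hs.le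
  have hg3 : 4 ^ a * 2 ^ (-b) * (1 / (-(a + b))) ≤ C := by
    rw [hCdef]
    exact mul_le_mul (mul_le_mul_of_nonneg_left (by linarith) h4a.le) (by linarith)
      h1ab.le (by positivity)
  intro r t hr ht
  have habs : |t + r| = t + r := abs_of_pos (by linarith)
  rw [habs]
  simp_rw [show ∀ lam : ℝ, r - t + lam = lam + (r - t) from fun lam => by ring]
  set c := r - t with hc'
  set d := |t - r| with hd'
  set q := t + r with hq'
  have hd0 : 0 ≤ d := abs_nonneg _
  have hdtr : t - r ≤ d := le_abs_self _
  have hdrt : -(t - r) ≤ d := neg_le_abs _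
  have hpq : d ≤ q := by
    rw [hd', hq']; rcases abs_cases (t - r) with ⟨h, _⟩ | ⟨h, _⟩ <;> rw [h] <;> linarith
  have hpc : 0 ≤ d + c := by rw [hc']; linarith
  have hqc : q + c = 2 * r := by rw [hq', hc']; ring
  have h1d : (0:ℝ) < 1 + d := by linarith
  have hX0 : (0:ℝ) < 1 + q := by rw [hq']; linarith
  have hyn : (0:ℝ) ≤ (1 + d) ^ (a + b) := rpow_nonneg h1d.le _
  -- useful rpow identities
  have e2 : (1 + d) ^ (-a) * (1 + d) ^ (a + b) = (1 + d) ^ b := by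
    rw [← rpow_add h1d]; ring_nf
  have e2' : (1 + d) ^ (-a) * (1 + d) ^ a = 1 := by
    rw [← rpow_add h1d]; norm_num
  have e3 : (2:ℝ) ^ a * 2 ^ a = 4 ^ a := by
    rw [← mul_rpow (by norm_num) (by norm_num)]; norm_num
  rcases le_or_gt (1 + q) (2 * (1 + d)) with hcase | hcase
  · -- Case 1
    have hJ := lemA ha hb0 hd0 hpq hpc
    rw [hqc] at hJ
    apply final_step hX0 hyn (K := 2 ^ a * r ^ a * (1 + d) ^ (-a) / a)
    · refine hJ.trans (le_of_eq ?_)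
      have : (2 * r) ^ a = 2 ^ a * r ^ a := mul_rpow (by norm_num) hr.le
      calc (1 + d) ^ b * ((2 * r) ^ a / a)
          = 2 ^ a * r ^ a * ((1 + d) ^ (-a) * (1 + d) ^ (a + b)) / a := by rw [e2, this]; ring
        _ = 2 ^ a * r ^ a * (1 + d) ^ (-a) / a * (1 + d) ^ (a + b) := by ring
    · have hXa_le : (1 + q) ^ a ≤ 2 ^ a * (1 + d) ^ a := by
        rw [← mul_rpow (by norm_num) h1d.le]
        exact rpow_le_rpow hX0.le hcase ha.le
      have hnn : (0:ℝ) ≤ 2 ^ a * r ^ a * (1 + d) ^ (-a) / a := by positivity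
      calc 2 ^ a * r ^ a * (1 + d) ^ (-a) / a * (1 + q) ^ a
          ≤ 2 ^ a * r ^ a * (1 + d) ^ (-a) / a * (2 ^ a * (1 + d) ^ a) :=
            mul_le_mul_of_nonneg_left hXa_le hnn
        _ = (2 ^ a * 2 ^ a) * r ^ a * ((1 + d) ^ (-a) * (1 + d) ^ a) / a := by ring
        _ = 4 ^ a / a * r ^ a := by rw [e2', e3]; ring
        _ ≤ C * r ^ a := by
            exact mul_le_mul_of_nonneg_right hg1 (rpow_nonneg hr.le a)
  · -- Case 2
    rw [hq'] at hcase
    have hr2 : 1 + d < 2 * r := by linarith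
    have hX4 : 1 + q < 4 * r := by rw [hq']; linarith
    have hXa4 : (1 + q) ^ a ≤ 4 ^ a * r ^ a := by
      rw [← mul_rpow (by norm_num) hr.le]
      exact rpow_le_rpow hX0.le hX4.le ha.le
    rcases le_or_gt c 1 with hc1 | hc1
    · -- Case 2a : c ≤ 1, split at m
      set m := 1 + d - c with hm'
      have hm1 : d ≤ m := by rw [hm']; linarith
      have hm2 : m ≤ q := by rw [hm']; linarith
      have hmc : m + c = 1 + d := by rw [hm']; ring
      have hpc2 : 0 < m + c := by rw [hmc]; linarith
      rw [split_int hm1 hm2 (f_ii ha c d q)]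
      have hJ1 := lemA ha hb0 hd0 hm1 hpc
      rw [hmc] at hJ1
      have hcomp2 : ∀ x ∈ Ioc m q, (1 + |x|) ^ b ≤ 1 * (x + c) ^ b := by
        intro x hx
        have hx0 : 0 < x := by
          have := hx.1
          rw [hm'] at this
          linarith
        have hxc : 0 < x + c := by
          have := hx.1
          linarith [hpc2]
        rw [abs_of_pos hx0, one_mul]
        exact rpow_le_rpow_of_nonpos hxc (by linarith) hb0
      have hJ2 := tail ha hab hpc2 hm2 zero_le_one hcomp2
      rw [hmc, one_mul] at hJ2
      have e4 : (1 + d) ^ a * (1 + d) ^ b = (1 + d) ^ (a + b) := by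
        rw [← rpow_add h1d]
      apply final_step hX0 hyn (K := 1 / a + 1 / (-(a + b)))
      · calc (∫ x in Ioc d m, (1 + |x|) ^ b * (x + c) ^ (a - 1)) +
            ∫ x in Ioc m q, (1 + |x|) ^ b * (x + c) ^ (a - 1)
            ≤ (1 + d) ^ b * ((1 + d) ^ a / a) + (1 + d) ^ (a + b) / (-(a + b)) :=
              add_le_add hJ1 hJ2
          _ = (1 / a + 1 / (-(a + b))) * (1 + d) ^ (a + b) := by
              rw [show (1 + d) ^ b * ((1 + d) ^ a / a)
                  = (1 + d) ^ a * (1 + d) ^ b / a by ring, e4]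
              ring
      · calc (1 / a + 1 / (-(a + b))) * (1 + q) ^ a
            ≤ (1 / a + 1 / (-(a + b))) * (4 ^ a * r ^ a) :=
              mul_le_mul_of_nonneg_left hXa4 hs.le
          _ = (4 ^ a * (1 / a + 1 / (-(a + b)))) * r ^ a := by ring
          _ ≤ C * r ^ a := by
              exact mul_le_mul_of_nonneg_right hg2 (rpow_nonneg hr.le a)
    · -- Case 2b : c > 1
      have hdc : d = c := by
        rw [hd', hc', abs_of_neg (show t - r < 0 by rw [hc'] at hc1; linarith)]
        ring
      have hpc3 : 0 < d + c := by rw [hdc]; linarith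
      have hcomp3 : ∀ x ∈ Ioc d q, (1 + |x|) ^ b ≤ 2 ^ (-b) * (x + c) ^ b := by
        intro x hx
        have hcx : c < x := by rw [← hdc]; exact hx.1
        have hx0 : 0 < x := by linarith
        have hxc : 0 < x + c := by linarith
        rw [abs_of_pos hx0]
        have h1 : (2 * (1 + x)) ^ b ≤ (x + c) ^ b :=
          rpow_le_rpow_of_nonpos hxc (by linarith) hb0
        rw [mul_rpow (by norm_num) (by linarith)] at h1
        have h2 : (2:ℝ) ^ (-b) * ((2:ℝ) ^ b * (1 + x) ^ b) ≤ 2 ^ (-b) * (x + c) ^ b :=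
          mul_le_mul_of_nonneg_left h1 h2b.le
        have h3 : (2:ℝ) ^ (-b) * 2 ^ b = 1 := by
          rw [← rpow_add (by norm_num : (0:ℝ) < 2)]; norm_num
        calc (1 + x) ^ b = 2 ^ (-b) * 2 ^ b * (1 + x) ^ b := by rw [h3]; ring
          _ ≤ 2 ^ (-b) * (x + c) ^ b := by rw [mul_assoc]; exact h2
      have hJ := tail ha hab hpc3 hpq h2b.le hcomp3
      have hdcle : (d + c) ^ (a + b) ≤ (1 + d) ^ (a + b) := by
        apply rpow_le_rpow_of_nonpos h1d _ hab.le
        rw [hdc]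
        rw [hc'] at hc1 ⊢
        linarith
      apply final_step hX0 hyn (K := 2 ^ (-b) / (-(a + b)))
      · refine hJ.trans ?_
        calc 2 ^ (-b) * ((d + c) ^ (a + b) / (-(a + b)))
            ≤ 2 ^ (-b) * ((1 + d) ^ (a + b) / (-(a + b))) := by
              apply mul_le_mul_of_nonneg_left _ h2b.le
              exact div_le_div_of_nonneg_right hdcle hnab.le
          _ = 2 ^ (-b) / (-(a + b)) * (1 + d) ^ (a + b) := by ring
      · calc 2 ^ (-b) / (-(a + b)) * (1 + q) ^ a
            ≤ 2 ^ (-b) / (-(a + b)) * (4 ^ a * r ^ a) :=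
              mul_le_mul_of_nonneg_left hXa4 (by positivity)
          _ = (4 ^ a * 2 ^ (-b) * (1 / (-(a + b)))) * r ^ a := by ring
          _ ≤ C * r ^ a := by
              exact mul_le_mul_of_nonneg_right hg3 (rpow_nonneg hr.le a)
end

section
/- Let m ≥ 1 and 0 ≤ i ≤ i₀ ≤ m be integers, and let T_m be the m-th Tchebyshev polynomial. Then there is a constant C = C(m) such that for all z < −1, |∫_{−1}^1 (σ−z)^{i−1/2} T_m(σ)(1−σ²)^{−1/2} dσ| ≤ C (−1−z)^{i−i₀−1/2}. -/
/-!
On `(-1, 1)`, `T_m(σ) (1 - σ²)^(-1/2)` is a constant multiple of the `m`-th derivative of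
`(1 - σ²)^(m - 1/2)`. The `k`-th derivative of `(1 - σ²)^a` has the closed form
`(1 - σ²)^(a - k) P_k(σ)` with `P_k` a polynomial, so for `k < a` it vanishes at `±1`, and for
`k < a + 1` it is integrable. Integrating by parts `i₀` times therefore moves `i₀` derivatives
onto `(σ - z)^(i - 1/2)` without boundary terms, leaving a constant times
`∫ (σ - z)^(i - i₀ - 1/2) D^(m - i₀) (1 - σ²)^(m - 1/2)`. As the exponent `i - i₀ - 1/2` is
negative, `(σ - z)^(i - i₀ - 1/2) ≤ (-1 - z)^(i - i₀ - 1/2)` on `[-1, 1]`.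
-/

open MeasureTheory Set Polynomial

-- `P_{k+1}` comes from differentiating `(1 - σ ^ 2) ^ (a - k) * P_k(σ)` by the product rule.
noncomputable def oneSubSqRpowDerivPoly (a : ℝ) : ℕ → ℝ[X]
  | 0 => 1
  | k + 1 => C (-2 * (a - k)) * X * oneSubSqRpowDerivPoly a k +
      (1 - X ^ 2) * derivative (oneSubSqRpowDerivPoly a k)

-- The `k`-th derivative of `(1 - σ ^ 2) ^ a` on `(-1, 1)` in closed form, which, unlike
-- `iteratedDeriv`, still makes sense at `±1`.
noncomputable def oneSubSqRpowDeriv (a : ℝ) (k : ℕ) (σ : ℝ) : ℝ :=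
  (1 - σ ^ 2) ^ (a - k) * (oneSubSqRpowDerivPoly a k).eval σ

lemma hasDerivAt_oneSubSqRpowDeriv (a : ℝ) (k : ℕ) {σ : ℝ} (hσ : 1 - σ ^ 2 ≠ 0) :
    HasDerivAt (oneSubSqRpowDeriv a k) (oneSubSqRpowDeriv a (k + 1) σ) σ := by
  have h := (((hasDerivAt_pow 2 σ).const_sub 1).rpow_const (p := a - k) (Or.inl hσ)).mul
    ((oneSubSqRpowDerivPoly a k).hasDerivAt σ)
  refine h.congr_deriv ?_
  unfold oneSubSqRpowDeriv
  rw [oneSubSqRpowDerivPoly, show a - ((k + 1 : ℕ) : ℝ) = a - k - 1 by push_cast; ring,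
    Real.rpow_sub_one hσ]
  simp only [eval_add, eval_mul, eval_C, eval_X, eval_sub, eval_one, eval_pow]
  field_simp
  ring

lemma iteratedDeriv_one_sub_sq_rpow (a : ℝ) (k : ℕ) {σ : ℝ} (hσ : σ ∈ Ioo (-1 : ℝ) 1) :
    iteratedDeriv k (fun y : ℝ => (1 - y ^ 2) ^ a) σ = oneSubSqRpowDeriv a k σ := by
  induction k generalizing σ with
  | zero => simp [oneSubSqRpowDeriv, oneSubSqRpowDerivPoly]
  | succ k ih =>
    have hσ' : 1 - σ ^ 2 ≠ 0 := by nlinarith [hσ.1, hσ.2]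
    rw [iteratedDeriv_succ, Filter.EventuallyEq.deriv_eq
      (Filter.eventuallyEq_of_mem (isOpen_Ioo.mem_nhds hσ) fun y hy => ih hy),
      (hasDerivAt_oneSubSqRpowDeriv a k hσ').deriv]

lemma continuous_oneSubSqRpowDeriv {a : ℝ} {k : ℕ} (hk : (k : ℝ) ≤ a) :
    Continuous (oneSubSqRpowDeriv a k) := by
  unfold oneSubSqRpowDeriv
  exact ((continuous_const.sub (continuous_pow 2)).rpow_const
    fun _ => Or.inr (sub_nonneg.2 hk)).mul (oneSubSqRpowDerivPoly a k).continuous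

lemma oneSubSqRpowDeriv_eq_zero {a : ℝ} {k : ℕ} (hk : (k : ℝ) < a) {σ : ℝ} (hσ : σ ^ 2 = 1) :
    oneSubSqRpowDeriv a k σ = 0 := by
  rw [oneSubSqRpowDeriv, hσ, sub_self, Real.zero_rpow (sub_ne_zero.2 hk.ne'), zero_mul]

lemma intervalIntegrable_one_sub_sq_rpow {p : ℝ} (hp : -1 < p) :
    IntervalIntegrable (fun σ : ℝ => (1 - σ ^ 2) ^ p) volume (-1) 1 := by
  have hsing : IntervalIntegrable (fun x : ℝ => x ^ p) volume 0 1 :=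
    intervalIntegral.intervalIntegrable_rpow' hp
  have hleft : IntervalIntegrable (fun σ : ℝ => (1 - σ) ^ p * (1 + σ) ^ p) volume (-1) 0 := by
    refine IntervalIntegrable.continuousOn_mul ?_ ?_
    · simpa [add_comm] using hsing.comp_add_right 1
    · refine ContinuousOn.rpow_const (f := fun σ : ℝ => 1 - σ) (by fun_prop)
        fun σ hσ => Or.inl ?_
      rw [uIcc_of_le (by norm_num)] at hσ
      linarith [hσ.2]
  have hright : IntervalIntegrable (fun σ : ℝ => (1 - σ) ^ p * (1 + σ) ^ p) volume 0 1 := by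
    refine IntervalIntegrable.mul_continuousOn ?_ ?_
    · simpa using (hsing.comp_sub_left 1).symm
    · refine ContinuousOn.rpow_const (f := fun σ : ℝ => 1 + σ) (by fun_prop)
        fun σ hσ => Or.inl ?_
      rw [uIcc_of_le (by norm_num)] at hσ
      linarith [hσ.1]
  refine (hleft.trans hright).congr_uIoo fun σ hσ => ?_
  rw [uIoo_of_le (by norm_num)] at hσ
  change (1 - σ) ^ p * (1 + σ) ^ p = _
  rw [← Real.mul_rpow (by linarith [hσ.2]) (by linarith [hσ.1])]
  ring_nf

lemma intervalIntegrable_oneSubSqRpowDeriv {a : ℝ} {k : ℕ} (hk : (k : ℝ) < a + 1) :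
    IntervalIntegrable (oneSubSqRpowDeriv a k) volume (-1) 1 :=
  (intervalIntegrable_one_sub_sq_rpow (by linarith)).mul_continuousOn
    (oneSubSqRpowDerivPoly a k).continuous.continuousOn

lemma integral_rpow_sub_mul_oneSubSqRpowDeriv_succ {a c z : ℝ} {k : ℕ} (hz : z < -1)
    (hk : (k : ℝ) < a) :
    ∫ σ in (-1)..1, (σ - z) ^ c * oneSubSqRpowDeriv a (k + 1) σ =
      -c * ∫ σ in (-1)..1, (σ - z) ^ (c - 1) * oneSubSqRpowDeriv a k σ := by
  have hpos : ∀ σ ∈ uIcc (-1 : ℝ) 1, σ - z ≠ 0 := fun σ hσ => by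
    rw [uIcc_of_le (by norm_num)] at hσ
    exact (by linarith [hσ.1] : 0 < σ - z).ne'
  have hu : ∀ σ ∈ uIcc (-1 : ℝ) 1,
      HasDerivAt (fun σ => (σ - z) ^ c) (c * (σ - z) ^ (c - 1)) σ := fun σ hσ => by
    simpa using ((hasDerivAt_id σ).sub_const z).rpow_const (Or.inl (hpos σ hσ))
  have hv : ∀ σ ∈ Ioo (min (-1 : ℝ) 1) (max (-1) 1),
      HasDerivAt (oneSubSqRpowDeriv a k) (oneSubSqRpowDeriv a (k + 1) σ) σ := fun σ hσ => by
    rw [min_eq_left (by norm_num), max_eq_right (by norm_num)] at hσ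
    exact hasDerivAt_oneSubSqRpowDeriv a k (by nlinarith [hσ.1, hσ.2])
  have hu' : IntervalIntegrable (fun σ => c * (σ - z) ^ (c - 1)) volume (-1) 1 :=
    (continuousOn_const.mul (ContinuousOn.rpow_const (by fun_prop)
      fun σ hσ => Or.inl (hpos σ hσ))).intervalIntegrable
  rw [intervalIntegral.integral_mul_deriv_eq_deriv_mul_of_hasDerivAt
    (fun σ hσ => (hu σ hσ).continuousAt.continuousWithinAt)
    (continuous_oneSubSqRpowDeriv hk.le).continuousOn
    (fun σ hσ => hu σ (Ioo_subset_Icc_self hσ)) hv hu'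
    (intervalIntegrable_oneSubSqRpowDeriv (by push_cast; linarith)),
    oneSubSqRpowDeriv_eq_zero hk (by norm_num), oneSubSqRpowDeriv_eq_zero hk (by norm_num)]
  simp only [mul_zero, sub_zero, zero_sub, mul_assoc, intervalIntegral.integral_const_mul, neg_mul]

lemma integral_rpow_sub_mul_oneSubSqRpowDeriv_add {a c z : ℝ} {k n : ℕ} (hz : z < -1)
    (hkn : (k + n : ℝ) < a + 1) :
    ∫ σ in (-1)..1, (σ - z) ^ c * oneSubSqRpowDeriv a (k + n) σ =
      (∏ t ∈ Finset.range n, ((t : ℝ) - c)) *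
        ∫ σ in (-1)..1, (σ - z) ^ (c - n) * oneSubSqRpowDeriv a k σ := by
  induction n generalizing k with
  | zero => simp
  | succ n ih =>
    rw [show k + (n + 1) = k + 1 + n by ring, ih (by push_cast at hkn ⊢; linarith),
      integral_rpow_sub_mul_oneSubSqRpowDeriv_succ hz (by push_cast at hkn; linarith),
      Finset.prod_range_succ, Nat.cast_add_one, ← sub_sub]
    ring

lemma abs_integral_rpow_sub_mul_le {a b z e : ℝ} {f : ℝ → ℝ} (hab : a ≤ b) (hz : z < a)
    (he : e ≤ 0) (hf : IntervalIntegrable f volume a b) :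
    |∫ σ in a..b, (σ - z) ^ e * f σ| ≤ (a - z) ^ e * ∫ σ in a..b, |f σ| := by
  have hcont : ContinuousOn (fun σ : ℝ => (σ - z) ^ e) (uIcc a b) :=
    ContinuousOn.rpow_const (by fun_prop) fun σ hσ => Or.inl (by
      rw [uIcc_of_le hab] at hσ
      linarith [hσ.1])
  calc |∫ σ in a..b, (σ - z) ^ e * f σ|
      ≤ ∫ σ in a..b, |(σ - z) ^ e * f σ| := intervalIntegral.abs_integral_le_integral_abs hab
    _ ≤ ∫ σ in a..b, (a - z) ^ e * |f σ| := by
      refine intervalIntegral.integral_mono_on hab (hf.continuousOn_mul hcont).abs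
        (hf.abs.const_mul _) fun σ hσ => ?_
      rw [abs_mul, abs_of_nonneg (Real.rpow_nonneg (x := σ - z) (by linarith [hσ.1]) e)]
      exact mul_le_mul_of_nonneg_right
        (Real.rpow_le_rpow_of_nonpos (by linarith) (by linarith [hσ.1]) he) (abs_nonneg _)
    _ = (a - z) ^ e * ∫ σ in a..b, |f σ| := intervalIntegral.integral_const_mul _ _

lemma abs_integral_rpow_sub_mul_oneSubSqRpowDeriv_add_le {a c z : ℝ} {k n : ℕ} (hz : z < -1)
    (hkn : (k + n : ℝ) < a + 1) (hcn : c ≤ n) :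
    |∫ σ in (-1)..1, (σ - z) ^ c * oneSubSqRpowDeriv a (k + n) σ| ≤
      |∏ t ∈ Finset.range n, ((t : ℝ) - c)| *
        ((-1 - z) ^ (c - n) * ∫ σ in (-1)..1, |oneSubSqRpowDeriv a k σ|) := by
  rw [integral_rpow_sub_mul_oneSubSqRpowDeriv_add hz hkn, abs_mul]
  gcongr
  exact abs_integral_rpow_sub_mul_le (by norm_num) hz (by linarith)
    (intervalIntegrable_oneSubSqRpowDeriv (by linarith))

theorem stmt_16_general (m : ℕ) (i i₀ : ℕ) (hi : i ≤ i₀) (hi₀ : i₀ ≤ m)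
    (T : ℝ → ℝ)
    (hT : ∀ x : ℝ, T x = ((-1 : ℝ) ^ m / (Nat.doubleFactorial (2 * m - 1) : ℝ)) *
      Real.sqrt (1 - x ^ 2) *
      iteratedDeriv m (fun y : ℝ => (1 - y ^ 2) ^ ((m : ℝ) - 1 / 2)) x) :
    ∃ C : ℝ, 0 < C ∧ ∀ z : ℝ, z < -1 →
      |∫ σ in Set.Ioo (-1 : ℝ) 1,
          (σ - z) ^ ((i : ℝ) - 1 / 2) * T σ * (1 - σ ^ 2) ^ (-(1 / 2 : ℝ))| ≤
        C * (-1 - z) ^ ((i : ℝ) - (i₀ : ℝ) - 1 / 2) := by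
  set c : ℝ := (-1 : ℝ) ^ m / (Nat.doubleFactorial (2 * m - 1) : ℝ)
  set F := oneSubSqRpowDeriv ((m : ℝ) - 1 / 2)
  have hTF : ∀ σ ∈ Ioo (-1 : ℝ) 1, T σ * (1 - σ ^ 2) ^ (-(1 / 2 : ℝ)) = c * F m σ := by
    intro σ hσ
    have h₀ : 0 < 1 - σ ^ 2 := by nlinarith [hσ.1, hσ.2]
    rw [hT, iteratedDeriv_one_sub_sq_rpow _ _ hσ, mul_right_comm, mul_assoc c,
      Real.sqrt_eq_rpow, ← Real.rpow_add h₀]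
    norm_num [F]
  set K : ℝ := |∏ t ∈ Finset.range i₀, ((t : ℝ) - (i - 1 / 2))| *
    ∫ σ in (-1)..1, |F (m - i₀) σ|
  have hK : 0 ≤ K := mul_nonneg (abs_nonneg _)
    (intervalIntegral.integral_nonneg (by norm_num) fun _ _ => abs_nonneg _)
  refine ⟨|c| * K + 1, by positivity, fun z hz => ?_⟩
  have hbound := abs_integral_rpow_sub_mul_oneSubSqRpowDeriv_add_le (a := (m : ℝ) - 1 / 2)
    (c := (i : ℝ) - 1 / 2) (k := m - i₀) (n := i₀) hz (by push_cast [hi₀]; linarith)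
    (by linarith [(Nat.cast_le (α := ℝ)).2 hi])
  rw [Nat.sub_add_cancel hi₀] at hbound
  rw [setIntegral_congr_fun measurableSet_Ioo fun σ hσ => by
      rw [mul_assoc, hTF σ hσ, mul_left_comm],
    integral_const_mul, ← integral_Ioc_eq_integral_Ioo,
    ← intervalIntegral.integral_of_le (by norm_num), abs_mul, sub_right_comm (i : ℝ) (i₀ : ℝ)]
  have hr := Real.rpow_nonneg (by linarith : (0 : ℝ) ≤ -1 - z) ((i : ℝ) - 1 / 2 - i₀)
  calc |c| * |∫ σ in (-1)..1, (σ - z) ^ ((i : ℝ) - 1 / 2) * F m σ|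
      ≤ |c| * (K * (-1 - z) ^ ((i : ℝ) - 1 / 2 - i₀)) := by
        gcongr
        linarith
    _ ≤ (|c| * K + 1) * (-1 - z) ^ ((i : ℝ) - 1 / 2 - i₀) := by nlinarith

/-- For 0 ≤ i ≤ i₀ ≤ m and z < −1,
|∫_{−1}^1 (σ−z)^{i−1/2} T_m(σ)(1−σ²)^{−1/2} dσ| ≤ C(m) (−1−z)^{i−i₀−1/2}. -/
theorem stmt_16 (m : ℕ) (hm : 1 ≤ m) (i i₀ : ℕ) (hi : i ≤ i₀) (hi₀ : i₀ ≤ m)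
    (T : ℝ → ℝ)
    (hT : ∀ x : ℝ, T x = ((-1 : ℝ) ^ m / (Nat.doubleFactorial (2 * m - 1) : ℝ)) *
      Real.sqrt (1 - x ^ 2) *
      iteratedDeriv m (fun y : ℝ => (1 - y ^ 2) ^ ((m : ℝ) - 1 / 2)) x) :
    ∃ C : ℝ, 0 < C ∧ ∀ z : ℝ, z < -1 →
      |∫ σ in Set.Ioo (-1 : ℝ) 1,
          (σ - z) ^ ((i : ℝ) - 1 / 2) * T σ * (1 - σ ^ 2) ^ (-(1 / 2 : ℝ))| ≤
        C * (-1 - z) ^ ((i : ℝ) - (i₀ : ℝ) - 1 / 2) :=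
  stmt_16_general m i i₀ hi hi₀ T hT
end

section
/- Let t ≥ r > 0, 0 < λ ≤ t + r, and let j, k ≥ 0 be integers with k ≥ 1. Then |∂_r^j ∂_t^k z(λ,r,t)| ≤ C(j,k) λ^{−1} r^{−j−k} t for a constant depending only on j and k, where z(λ,r,t) = (λ²+r²−t²)/(2rλ). -/
/-!
For fixed `r`, `z` is a quadratic polynomial in `t`, so `∂_t^k z = -(2)ₖ t^(2-k) / (2rλ)` with the
falling factorial `(2)ₖ`, which vanishes for `k ≥ 3`. As a function of `r` this is a constant
multiple of `r⁻¹`, whence `|∂_r^j ∂_t^k z| = j! (2)ₖ t^(2-k) / (2λ) · r^(-j-1)`; for `k = 2` the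
missing factor `t / r` is at least `1` because `r ≤ t`.
-/

theorem iteratedDeriv_const_sub_sq_div {𝕜 : Type*} [NontriviallyNormedField 𝕜] {k : ℕ}
    (hk : 0 < k) (a b t : 𝕜) :
    iteratedDeriv k (fun t' => (a - t' ^ 2) / b) t = -((2).descFactorial k * t ^ (2 - k)) / b := by
  rw [iteratedDeriv_div_const, iteratedDeriv_const_sub hk, iteratedDeriv_neg, iteratedDeriv_pow]

theorem abs_iteratedDeriv_const_mul_inv (j : ℕ) (c : ℝ) {x : ℝ} (hx : 0 < x) :
    |iteratedDeriv j (fun y => c * y⁻¹) x| = |c| * j.factorial * x ^ (-(j : ℝ) - 1) := by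
  rw [iteratedDeriv_const_mul_field, iteratedDeriv_eq_iterate, iter_deriv_inv, abs_mul, abs_mul,
    abs_mul, abs_pow, abs_neg, abs_one, one_pow, one_mul, Nat.abs_cast,
    abs_of_pos (zpow_pos hx _), ← Real.rpow_intCast]
  push_cast
  ring_nf

theorem descFactorial_two_mul_pow_le {k : ℕ} (hk : 1 ≤ k) {r t : ℝ} (hr : 0 < r) (hrt : r ≤ t) :
    (2).descFactorial k * t ^ (2 - k) ≤ 2 * t * r ^ (1 - (k : ℝ)) := by
  have ht : 0 < t := hr.trans_le hrt
  match k, hk with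
  | 1, _ => norm_num
  | 2, _ =>
    rw [show (1 : ℝ) - (2 : ℕ) = -1 by norm_num, Real.rpow_neg_one]
    norm_num
    rw [le_mul_inv_iff₀ hr]
    linarith
  | m + 3, _ =>
    rw [Nat.descFactorial_eq_zero_iff_lt.mpr (by omega)]
    simp only [Nat.cast_zero, zero_mul]
    positivity

/-- For t ≥ r > 0, 0 < λ ≤ t+r and k ≥ 1,
|∂_r^j ∂_t^k z(λ,r,t)| ≤ C(j,k) λ⁻¹ r^{−j−k} t. -/
theorem stmt_17 (j k : ℕ) (hk : 1 ≤ k) :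
    ∃ C : ℝ, 0 < C ∧ ∀ r t lam : ℝ, 0 < r → r ≤ t → 0 < lam → lam ≤ t + r →
      |iteratedDeriv j
          (fun r' : ℝ => iteratedDeriv k
            (fun t' : ℝ => (lam ^ 2 + r' ^ 2 - t' ^ 2) / (2 * r' * lam)) t) r| ≤
        C * lam⁻¹ * r ^ (-(j : ℝ) - (k : ℝ)) * t := by
  refine ⟨j.factorial, by positivity, fun r t lam hr hrt hlam _ => ?_⟩
  have h_inner : (fun r' : ℝ => iteratedDeriv k
      (fun t' : ℝ => (lam ^ 2 + r' ^ 2 - t' ^ 2) / (2 * r' * lam)) t) =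
      fun r' => -((2).descFactorial k * t ^ (2 - k)) / (2 * lam) * r'⁻¹ := by
    funext r'
    rw [iteratedDeriv_const_sub_sq_div hk]
    field_simp
  have h_coeff : |-((2).descFactorial k * t ^ (2 - k)) / (2 * lam)| ≤
      lam⁻¹ * t * r ^ (1 - (k : ℝ)) := by
    have ht : 0 < t := hr.trans_le hrt
    rw [abs_div, abs_neg, abs_of_nonneg (by positivity), abs_of_pos (by positivity),
      div_le_iff₀ (by positivity)]
    calc _ ≤ 2 * t * r ^ (1 - (k : ℝ)) := descFactorial_two_mul_pow_le hk hr hrt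
      _ = _ := by field_simp
  rw [h_inner, abs_iteratedDeriv_const_mul_inv j _ hr]
  calc _ ≤ lam⁻¹ * t * r ^ (1 - (k : ℝ)) * j.factorial * r ^ (-(j : ℝ) - 1) := by gcongr
    _ = j.factorial * lam⁻¹ * r ^ (-(j : ℝ) - k) * t := by
      rw [show -(j : ℝ) - k = (1 - k) + (-j - 1) by ring, Real.rpow_add hr]
      ring
end

section
/- Let i, j, k ≥ 0 be integers. Then there is a constant C(i,j,k) such that for all r, t > 0 and 0 < λ ≤ t + r, |∂_λ^i ∂_r^j ∂_t^k z(λ,r,t)| ≤ C(i,j,k) λ^{−1−i} r^{−1−j} (t+r)^{2−k}, where z(λ,r,t) = (λ²+r²−t²)/(2rλ). -/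
/-!
The identity `z = λ r⁻¹ / 2 + λ⁻¹ r / 2 - λ⁻¹ r⁻¹ t² / 2` (valid for all real arguments, both
sides being `0` when `r = 0` or `λ = 0`) writes `z` as a sum of monomials `λ^a r^b t^e` with
`a, b ≥ -1`, `e ≥ 0` and `a + b + e = 0`. The mixed derivatives of a monomial are explicit
monomials, and a term with `k > e` vanishes. Otherwise
`λ^(a-i) r^(b-j) t^(e-k) = λ^(-1-i) r^(-1-j) · λ^(a+1) r^(b+1) t^(e-k)`, and since
`λ, r, t ≤ t + r` the last three factors are at most `(t + r)^(a+b+e+2-k) = (t + r)^(2-k)`.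
-/

open Finset

section IteratedDerivZpow

variable {𝕜 : Type*} [NontriviallyNormedField 𝕜]

theorem iteratedDeriv_const_mul_zpow (c : 𝕜) (m : ℤ) (n : ℕ) (x : 𝕜) :
    iteratedDeriv n (fun y => c * y ^ m) x =
      c * (∏ q ∈ range n, ((m : 𝕜) - q)) * x ^ (m - n) := by
  rw [iteratedDeriv_const_mul_field, iteratedDeriv_eq_iterate, iter_deriv_zpow, mul_assoc]

theorem iteratedDeriv_sum_const_mul_zpow [CompleteSpace 𝕜] {ι : Type*} (s : Finset ι)
    (c : ι → 𝕜) (m : ι → ℤ) (n : ℕ) {x : 𝕜} (hx : x ≠ 0) :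
    iteratedDeriv n (fun y => ∑ σ ∈ s, c σ * y ^ m σ) x =
      ∑ σ ∈ s, c σ * (∏ q ∈ range n, ((m σ : 𝕜) - q)) * x ^ (m σ - n) := by
  have smooth : ∀ σ ∈ s, ContDiffAt 𝕜 n (fun y => c σ * y ^ m σ) x := fun σ _ =>
    (analyticAt_const.mul (analyticAt_id.zpow hx)).contDiffAt
  rw [iteratedDeriv_fun_sum smooth]
  simp only [iteratedDeriv_const_mul_zpow]

theorem iteratedDeriv_iteratedDeriv_iteratedDeriv_sum_monomial [CompleteSpace 𝕜] {ι : Type*}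
    (s : Finset ι) (c : ι → 𝕜) (a b e : ι → ℤ) (i j k : ℕ) {l r t : 𝕜}
    (hl : l ≠ 0) (hr : r ≠ 0) (ht : t ≠ 0) :
    iteratedDeriv i (fun l' => iteratedDeriv j (fun r' => iteratedDeriv k
        (fun t' => ∑ σ ∈ s, c σ * l' ^ a σ * r' ^ b σ * t' ^ e σ) t) r) l =
      ∑ σ ∈ s, c σ * (∏ q ∈ range i, ((a σ : 𝕜) - q)) * (∏ q ∈ range j, ((b σ : 𝕜) - q)) *
        (∏ q ∈ range k, ((e σ : 𝕜) - q)) * l ^ (a σ - i) * r ^ (b σ - j) * t ^ (e σ - k) := by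
  have deriv_t : ∀ l' r', iteratedDeriv k
      (fun t' => ∑ σ ∈ s, c σ * l' ^ a σ * r' ^ b σ * t' ^ e σ) t =
        ∑ σ ∈ s, (c σ * l' ^ a σ * (∏ q ∈ range k, ((e σ : 𝕜) - q)) * t ^ (e σ - k)) *
          r' ^ b σ := by
    intro l' r'
    rw [iteratedDeriv_sum_const_mul_zpow _ _ _ _ ht]
    exact sum_congr rfl fun _ _ => by ring
  have deriv_r : ∀ l', iteratedDeriv j (fun r' => iteratedDeriv k
      (fun t' => ∑ σ ∈ s, c σ * l' ^ a σ * r' ^ b σ * t' ^ e σ) t) r =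
        ∑ σ ∈ s, (c σ * (∏ q ∈ range j, ((b σ : 𝕜) - q)) * (∏ q ∈ range k, ((e σ : 𝕜) - q)) *
          r ^ (b σ - j) * t ^ (e σ - k)) * l' ^ a σ := by
    intro l'
    simp only [deriv_t]
    rw [iteratedDeriv_sum_const_mul_zpow _ _ _ _ hr]
    exact sum_congr rfl fun _ _ => by ring
  simp only [deriv_r]
  rw [iteratedDeriv_sum_const_mul_zpow _ _ _ _ hl]
  exact sum_congr rfl fun _ _ => by ring

end IteratedDerivZpow

theorem prod_range_intCast_sub_eq_zero {R : Type*} [CommRing R] {e : ℤ} {k : ℕ} (he : 0 ≤ e)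
    (hk : e < k) :
    ∏ q ∈ range k, ((e : R) - q) = 0 := by
  lift e to ℕ using he
  exact prod_eq_zero (i := e) (mem_range.2 (by omega)) (by simp)

theorem zpow_mul_zpow_mul_zpow_le {lam r t : ℝ} (hlam : 0 < lam) (hr : 0 < r) (ht : 0 < t)
    (hlam_le : lam ≤ t + r) {a b e : ℤ} (ha : -1 ≤ a) (hb : -1 ≤ b) {k : ℕ} (hk : k ≤ e)
    (i j : ℕ) :
    lam ^ (a - i) * r ^ (b - j) * t ^ (e - k) ≤
      lam ^ (-1 - i : ℤ) * r ^ (-1 - j : ℤ) * (t + r) ^ (a + b + e + 2 - k) := by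
  obtain ⟨α, hα⟩ : ∃ α : ℕ, a + 1 = α := ⟨(a + 1).toNat, by omega⟩
  obtain ⟨β, hβ⟩ : ∃ β : ℕ, b + 1 = β := ⟨(b + 1).toNat, by omega⟩
  obtain ⟨γ, hγ⟩ : ∃ γ : ℕ, e - k = γ := ⟨(e - k).toNat, by omega⟩
  have split : ∀ x : ℝ, x ≠ 0 → ∀ p q : ℤ, ∀ n : ℕ, p = q + n → x ^ p = x ^ q * x ^ n := by
    intro x hx p q n h
    rw [h, zpow_add₀ hx, zpow_natCast]
  rw [split lam hlam.ne' _ (-1 - i) α (by omega), split r hr.ne' _ (-1 - j) β (by omega), hγ,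
    show a + b + e + 2 - k = ((α + β + γ : ℕ) : ℤ) by push_cast; omega, zpow_natCast,
    zpow_natCast, pow_add, pow_add]
  have hle : lam ^ α * r ^ β * t ^ γ ≤ (t + r) ^ α * (t + r) ^ β * (t + r) ^ γ := by
    gcongr <;> linarith
  calc lam ^ (-1 - i : ℤ) * lam ^ α * (r ^ (-1 - j : ℤ) * r ^ β) * t ^ γ
      = lam ^ (-1 - i : ℤ) * r ^ (-1 - j : ℤ) * (lam ^ α * r ^ β * t ^ γ) := by ring
    _ ≤ lam ^ (-1 - i : ℤ) * r ^ (-1 - j : ℤ) * ((t + r) ^ α * (t + r) ^ β * (t + r) ^ γ) := by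
      gcongr

theorem exists_bound_iteratedDeriv_sum_monomial {ι : Type*} (s : Finset ι) (c : ι → ℝ)
    (a b e : ι → ℤ) (ha : ∀ σ ∈ s, -1 ≤ a σ) (hb : ∀ σ ∈ s, -1 ≤ b σ) (he : ∀ σ ∈ s, 0 ≤ e σ)
    (hdeg : ∀ σ ∈ s, a σ + b σ + e σ = 0) (i j k : ℕ) :
    ∃ C : ℝ, 0 < C ∧ ∀ r t lam : ℝ, 0 < r → 0 < t → 0 < lam → lam ≤ t + r →
      |iteratedDeriv i (fun l => iteratedDeriv j (fun r' => iteratedDeriv k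
          (fun t' => ∑ σ ∈ s, c σ * l ^ a σ * r' ^ b σ * t' ^ e σ) t) r) lam| ≤
        C * lam ^ (-1 - (i : ℝ)) * r ^ (-1 - (j : ℝ)) * (t + r) ^ (2 - (k : ℝ)) := by
  set coeff : ι → ℝ := fun σ => c σ * (∏ q ∈ range i, ((a σ : ℝ) - q)) *
    (∏ q ∈ range j, ((b σ : ℝ) - q)) * (∏ q ∈ range k, ((e σ : ℝ) - q))
  refine ⟨∑ σ ∈ s, |coeff σ| + 1, by positivity, fun r t lam hr ht hlam hle => ?_⟩
  rw [iteratedDeriv_iteratedDeriv_iteratedDeriv_sum_monomial _ _ _ _ _ _ _ _ hlam.ne' hr.ne'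
    ht.ne']
  set bound := lam ^ (-1 - i : ℤ) * r ^ (-1 - j : ℤ) * (t + r) ^ (2 - k : ℤ)
  have bound_pos : 0 < bound := by positivity
  have term_le : ∀ σ ∈ s, |coeff σ * lam ^ (a σ - i) * r ^ (b σ - j) * t ^ (e σ - k)| ≤
      |coeff σ| * bound := by
    intro σ hσ
    rcases le_or_gt (k : ℤ) (e σ) with hk | hk
    · rw [mul_assoc, mul_assoc, abs_mul,
        abs_of_pos (by positivity : 0 < lam ^ (a σ - i) * (r ^ (b σ - j) * t ^ (e σ - k)))]
      gcongr
      rw [← mul_assoc]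
      simpa only [hdeg σ hσ, zero_add] using
        zpow_mul_zpow_mul_zpow_le hlam hr ht hle (ha σ hσ) (hb σ hσ) hk i j
    · simp [coeff, prod_range_intCast_sub_eq_zero (he σ hσ) hk]
  calc |∑ σ ∈ s, coeff σ * lam ^ (a σ - i) * r ^ (b σ - j) * t ^ (e σ - k)|
      ≤ ∑ σ ∈ s, |coeff σ| * bound := (abs_sum_le_sum_abs _ _).trans (sum_le_sum term_le)
    _ ≤ (∑ σ ∈ s, |coeff σ| + 1) * bound := by rw [← sum_mul]; gcongr; linarith
    _ = _ := by
      simp only [bound, ← Real.rpow_intCast]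
      push_cast
      ring

/-- For all i, j, k ≥ 0 there is C(i,j,k) with
|∂_λ^i ∂_r^j ∂_t^k z(λ,r,t)| ≤ C λ^{−1−i} r^{−1−j} (t+r)^{2−k}
for all r, t > 0 and 0 < λ ≤ t+r. -/
theorem stmt_18 (i j k : ℕ) :
    ∃ C : ℝ, 0 < C ∧ ∀ r t lam : ℝ, 0 < r → 0 < t → 0 < lam → lam ≤ t + r →
      |iteratedDeriv i
          (fun l : ℝ => iteratedDeriv j
            (fun r' : ℝ => iteratedDeriv k
              (fun t' : ℝ => (l ^ 2 + r' ^ 2 - t' ^ 2) / (2 * r' * l)) t) r) lam| ≤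
        C * lam ^ (-1 - (i : ℝ)) * r ^ (-1 - (j : ℝ)) * (t + r) ^ (2 - (k : ℝ)) := by
  have z_eq_sum : ∀ l r t : ℝ, (l ^ 2 + r ^ 2 - t ^ 2) / (2 * r * l) =
      ∑ σ : Fin 3, ![1 / 2, 1 / 2, -1 / 2] σ * l ^ (![1, -1, -1] σ : ℤ) *
        r ^ (![-1, 1, -1] σ : ℤ) * t ^ (![0, 0, 2] σ : ℤ) := by
    intro l r t
    rcases eq_or_ne l 0 with rfl | hl
    · simp [Fin.sum_univ_three]
    rcases eq_or_ne r 0 with rfl | hr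
    · simp [Fin.sum_univ_three]
    simp only [Fin.sum_univ_three, Matrix.cons_val_zero, Matrix.cons_val_one, Matrix.cons_val,
      zpow_neg, zpow_one, zpow_zero]
    field_simp
    ring
  simp only [z_eq_sum]
  exact exists_bound_iteratedDeriv_sum_monomial _ _ _ _ _ (by decide) (by decide) (by decide)
    (by decide) i j k
end
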